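/- Let u₁ ≥ u₂ ≥ ⋯ ≥ u_K > 0 be nonincreasing and β₁, …, β_K ≥ 1 be reals such that for every dyadic block S_k = {2^k, …, min{K, 2^{k+1}−1}} and every integer β ≥ 2, |{i ∈ S_k : βᵢ ≥ β}| ≤ |S_k|·2^{−β/4}. Then for every T > 0, Σ_{j=1}^K βⱼ·min{uⱼ, T} ≤ 67·Σ_{j=1}^K min{uⱼ, T}. -/

import Mathlib

/-!
Write `v j = min (u j) T`. Since `β ≤ 2 + #{b ≥ 2 : b ≤ β}`, swapping sums reduces the claim to
bounding, for each integer `b ≥ 2`, the mass `∑_{β_j ≥ b} v_j`. On the block `S_k` the weights are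
at most `v (2^k)`, so this mass is at most `2^{-b/4} ∑_k |S_k| v (2^k)`; and as `|S_{k+1}| ≤ 2 |S_k|`
while every weight on `S_k` is at least `v (2^{k+1})`, we get `∑_k |S_k| v (2^k) ≤ 3 ∑_j v_j`.
Summing `∑_{b ≥ 2} 2^{-b/4} ≤ 5` gives the constant `2 + 3 · 5 = 17 ≤ 67`.
-/

open Finset

def dyadicBlock (K k : ℕ) : Finset ℕ := Icc (2 ^ k) (min K (2 ^ (k + 1) - 1))

section DyadicBlock

variable {K k j : ℕ}

lemma mem_dyadicBlock : j ∈ dyadicBlock K k ↔ 2 ^ k ≤ j ∧ j ≤ K ∧ j < 2 ^ (k + 1) := by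
  have := Nat.one_le_two_pow (n := k + 1)
  simp only [dyadicBlock, mem_Icc, le_min_iff]
  omega

lemma dyadicBlock_subset_Icc : dyadicBlock K k ⊆ Icc 1 K := fun j hj => by
  have := Nat.one_le_two_pow (n := k)
  rw [mem_dyadicBlock] at hj
  rw [mem_Icc]
  omega

lemma dyadicBlock_eq_empty (h : K < 2 ^ k) : dyadicBlock K k = ∅ :=
  eq_empty_of_forall_notMem fun j hj => by rw [mem_dyadicBlock] at hj; omega

lemma card_dyadicBlock_succ_le : #(dyadicBlock K (k + 1)) ≤ 2 * #(dyadicBlock K k) := by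
  have := Nat.one_le_two_pow (n := k)
  simp only [dyadicBlock, Nat.card_Icc, pow_succ]
  omega

variable (K) in
lemma biUnion_dyadicBlock : (range (Nat.log 2 K + 1)).biUnion (dyadicBlock K) = Icc 1 K := by
  ext j
  simp only [mem_biUnion, mem_range, mem_dyadicBlock, mem_Icc]
  constructor
  · rintro ⟨k, -, hk, hjK, -⟩
    have := Nat.one_le_two_pow (n := k)
    omega
  · rintro ⟨hj, hjK⟩
    exact ⟨Nat.log 2 j, Nat.lt_succ_of_le (Nat.log_mono_right hjK),
      Nat.pow_log_le_self 2 (by omega), hjK, Nat.lt_pow_succ_log_self one_lt_two j⟩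

variable (K) in
lemma pairwise_disjoint_dyadicBlock : Pairwise (Function.onFun Disjoint (dyadicBlock K)) := by
  refine (pairwise_disjoint_on _).2 fun m n hmn => disjoint_left.2 fun j hm hn => ?_
  have := Nat.pow_le_pow_right two_pos (Nat.succ_le_of_lt hmn)
  rw [mem_dyadicBlock] at hm hn
  omega

lemma sum_Icc_eq_sum_sum_dyadicBlock {M : Type*} [AddCommMonoid M] (K : ℕ) (f : ℕ → M) :
    ∑ j ∈ Icc 1 K, f j = ∑ k ∈ range (Nat.log 2 K + 1), ∑ j ∈ dyadicBlock K k, f j := by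
  rw [← biUnion_dyadicBlock, sum_biUnion ((pairwise_disjoint_dyadicBlock K).set_pairwise _)]

end DyadicBlock

section Antitone

variable {K : ℕ} {v : ℕ → ℝ}

lemma card_mul_le_sum_dyadicBlock (hv0 : ∀ j ∈ Icc 1 K, 0 ≤ v j)
    (hv : AntitoneOn v (Set.Icc 1 K)) (k : ℕ) :
    #(dyadicBlock K (k + 1)) * v (2 ^ (k + 1)) ≤ 2 * ∑ j ∈ dyadicBlock K k, v j := by
  have hsum0 : 0 ≤ ∑ j ∈ dyadicBlock K k, v j :=
    sum_nonneg fun j hj => hv0 j (dyadicBlock_subset_Icc hj)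
  rcases lt_or_ge K (2 ^ (k + 1)) with hK | hK
  · simp [dyadicBlock_eq_empty hK, hsum0]
  have hmem : 2 ^ (k + 1) ∈ Icc 1 K := mem_Icc.2 ⟨Nat.one_le_two_pow, hK⟩
  have hle : ∀ j ∈ dyadicBlock K k, v (2 ^ (k + 1)) ≤ v j := fun j hj => by
    have hjK := mem_Icc.1 (dyadicBlock_subset_Icc hj)
    exact hv ⟨hjK.1, hjK.2⟩ ⟨Nat.one_le_two_pow, hK⟩ (mem_dyadicBlock.1 hj).2.2.le
  have hcard : (#(dyadicBlock K (k + 1)) : ℝ) ≤ 2 * #(dyadicBlock K k) := by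
    exact_mod_cast card_dyadicBlock_succ_le
  calc #(dyadicBlock K (k + 1)) * v (2 ^ (k + 1))
      ≤ 2 * (#(dyadicBlock K k) * v (2 ^ (k + 1))) := by
        rw [← mul_assoc]; exact mul_le_mul_of_nonneg_right hcard (hv0 _ hmem)
    _ ≤ 2 * ∑ j ∈ dyadicBlock K k, v j := by
        gcongr; simpa using card_nsmul_le_sum _ _ _ hle

lemma sum_card_dyadicBlock_mul_le (hv0 : ∀ j ∈ Icc 1 K, 0 ≤ v j)
    (hv : AntitoneOn v (Set.Icc 1 K)) :
    ∑ k ∈ range (Nat.log 2 K + 1), #(dyadicBlock K k) * v (2 ^ k)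
      ≤ 3 * ∑ j ∈ Icc 1 K, v j := by
  have hblock0 : #(dyadicBlock K 0) * v (2 ^ 0) = ∑ j ∈ dyadicBlock K 0, v j := by
    rw [← nsmul_eq_mul, ← sum_const]
    refine sum_congr rfl fun j hj => ?_
    rw [mem_dyadicBlock] at hj
    rw [show j = 2 ^ 0 by omega]
  have hsum_nonneg : ∀ k, 0 ≤ ∑ j ∈ dyadicBlock K k, v j := fun k =>
    sum_nonneg fun j hj => hv0 j (dyadicBlock_subset_Icc hj)
  have hblock_le : ∀ s ⊆ range (Nat.log 2 K + 1),
      ∑ k ∈ s, ∑ j ∈ dyadicBlock K k, v j ≤ ∑ j ∈ Icc 1 K, v j := fun s hs => by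
    rw [sum_Icc_eq_sum_sum_dyadicBlock]
    exact sum_le_sum_of_subset_of_nonneg hs fun k _ _ => hsum_nonneg k
  calc ∑ k ∈ range (Nat.log 2 K + 1), #(dyadicBlock K k) * v (2 ^ k)
      = ∑ k ∈ range (Nat.log 2 K), #(dyadicBlock K (k + 1)) * v (2 ^ (k + 1))
          + ∑ j ∈ dyadicBlock K 0, v j := by rw [sum_range_succ', hblock0]
    _ ≤ 2 * ∑ k ∈ range (Nat.log 2 K), ∑ j ∈ dyadicBlock K k, v j
          + ∑ k ∈ {0}, ∑ j ∈ dyadicBlock K k, v j := by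
        rw [mul_sum, sum_singleton]
        exact add_le_add_left (sum_le_sum fun k _ => card_mul_le_sum_dyadicBlock hv0 hv k) _
    _ ≤ 3 * ∑ j ∈ Icc 1 K, v j := by
        have h₁ := hblock_le _ (range_subset_range.2 (Nat.le_succ _))
        have h₂ := hblock_le {0} (by simp)
        linarith

lemma sum_filter_le_of_card_filter_dyadicBlock_le (hv0 : ∀ j ∈ Icc 1 K, 0 ≤ v j)
    (hv : AntitoneOn v (Set.Icc 1 K)) (p : ℕ → Prop) [DecidablePred p] {c : ℝ} (hc : 0 ≤ c)
    (hp : ∀ k, (#{j ∈ dyadicBlock K k | p j} : ℝ) ≤ #(dyadicBlock K k) * c) :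
    ∑ j ∈ Icc 1 K with p j, v j ≤ c * (3 * ∑ j ∈ Icc 1 K, v j) := by
  have hblock : ∀ k,
      ∑ j ∈ dyadicBlock K k with p j, v j ≤ c * (#(dyadicBlock K k) * v (2 ^ k)) := by
    intro k
    rcases lt_or_ge K (2 ^ k) with hK | hK
    · simp [dyadicBlock_eq_empty hK]
    have hle : ∀ j ∈ {j ∈ dyadicBlock K k | p j}, v j ≤ v (2 ^ k) := fun j hj => by
      have hj := (mem_filter.1 hj).1
      have hjK := mem_Icc.1 (dyadicBlock_subset_Icc hj)
      exact hv ⟨Nat.one_le_two_pow, hK⟩ ⟨hjK.1, hjK.2⟩ (mem_dyadicBlock.1 hj).1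
    calc ∑ j ∈ dyadicBlock K k with p j, v j
        ≤ #{j ∈ dyadicBlock K k | p j} * v (2 ^ k) := by
          simpa using sum_le_card_nsmul _ _ _ hle
      _ ≤ #(dyadicBlock K k) * c * v (2 ^ k) :=
          mul_le_mul_of_nonneg_right (hp k) (hv0 _ (mem_Icc.2 ⟨Nat.one_le_two_pow, hK⟩))
      _ = c * (#(dyadicBlock K k) * v (2 ^ k)) := by ring
  calc ∑ j ∈ Icc 1 K with p j, v j
      = ∑ k ∈ range (Nat.log 2 K + 1), ∑ j ∈ dyadicBlock K k with p j, v j := by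
        simp only [sum_filter]
        exact sum_Icc_eq_sum_sum_dyadicBlock K _
    _ ≤ ∑ k ∈ range (Nat.log 2 K + 1), c * (#(dyadicBlock K k) * v (2 ^ k)) :=
        sum_le_sum fun k _ => hblock k
    _ ≤ c * (3 * ∑ j ∈ Icc 1 K, v j) := by
        rw [← mul_sum]
        exact mul_le_mul_of_nonneg_left (sum_card_dyadicBlock_mul_le hv0 hv) hc

end Antitone

lemma le_two_add_card_filter_Icc {x : ℝ} {B : ℕ} (hx : x ≤ B) :
    x ≤ 2 + #{b ∈ Icc 2 B | ((b : ℕ) : ℝ) ≤ x} := by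
  have hfilter : {b ∈ Icc 2 B | ((b : ℕ) : ℝ) ≤ x} = Icc 2 ⌊x⌋₊ := by
    ext b
    simp only [mem_filter, mem_Icc]
    constructor
    · rintro ⟨⟨hb, -⟩, hbx⟩
      exact ⟨hb, (Nat.le_floor_iff' (by omega)).2 hbx⟩
    · rintro ⟨hb, hbx⟩
      exact ⟨⟨hb, hbx.trans (Nat.floor_le_of_le hx)⟩, (Nat.le_floor_iff' (by omega)).1 hbx⟩
  have hcard : ⌊x⌋₊ + 1 ≤ 2 + #(Icc 2 ⌊x⌋₊) := by
    rw [Nat.card_Icc]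
    omega
  rw [hfilter]
  calc x ≤ ⌊x⌋₊ + 1 := (Nat.lt_floor_add_one x).le
    _ ≤ 2 + #(Icc 2 ⌊x⌋₊) := by exact_mod_cast hcard

lemma sum_mul_le_of_sum_filter_le {ι : Type*} {s : Finset ι} {x w : ι → ℝ} {c : ℕ → ℝ} {C : ℝ}
    (hw : ∀ i ∈ s, 0 ≤ w i) (hc : ∀ b : ℕ, 2 ≤ b → ∑ i ∈ s with (b : ℝ) ≤ x i, w i ≤ c b)
    (hC : ∀ B : ℕ, ∑ b ∈ Icc 2 B, c b ≤ C) :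
    ∑ i ∈ s, x i * w i ≤ 2 * ∑ i ∈ s, w i + C := by
  obtain ⟨M, hM⟩ := (s.image x).exists_le
  obtain ⟨B, hB⟩ := exists_nat_ge M
  calc ∑ i ∈ s, x i * w i
      ≤ ∑ i ∈ s, (2 + #{b ∈ Icc 2 B | ((b : ℕ) : ℝ) ≤ x i}) * w i :=
        sum_le_sum fun i hi => mul_le_mul_of_nonneg_right
          (le_two_add_card_filter_Icc ((hM _ (mem_image_of_mem x hi)).trans hB)) (hw i hi)
    _ = 2 * ∑ i ∈ s, w i + ∑ b ∈ Icc 2 B, ∑ i ∈ s with (b : ℝ) ≤ x i, w i := by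
        simp only [add_mul, sum_add_distrib, mul_sum, natCast_card_filter, sum_mul, ite_mul,
          one_mul, zero_mul, sum_filter]
        rw [sum_comm]
    _ ≤ 2 * ∑ i ∈ s, w i + ∑ b ∈ Icc 2 B, c b := by
        gcongr with b hb
        exact hc b (mem_Icc.1 hb).1
    _ ≤ 2 * ∑ i ∈ s, w i + C := by linarith [hC B]

lemma sum_Icc_two_rpow_neg_div_four_le (B : ℕ) : ∑ b ∈ Icc 2 B, (2 : ℝ) ^ (-(b : ℝ) / 4) ≤ 5 := by
  set r : ℝ := 2 ^ (-(1 : ℝ) / 4)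
  have hr0 : 0 ≤ r := by positivity
  have hpow : ∀ b : ℕ, (2 : ℝ) ^ (-(b : ℝ) / 4) = r ^ b := fun b => by
    rw [← Real.rpow_natCast, ← Real.rpow_mul zero_le_two]
    ring_nf
  have hr : r ≤ 0.85 := by
    have hr4 : r ^ 4 = 1 / 2 := by
      rw [← hpow]
      norm_num [Real.rpow_neg_one]
    exact le_of_pow_le_pow_left₀ four_ne_zero (by norm_num) (by rw [hr4]; norm_num)
  simp only [hpow, ← Ico_add_one_right_eq_Icc]
  calc ∑ b ∈ Ico 2 (B + 1), r ^ b ≤ r ^ 2 / (1 - r) := geom_sum_Ico_le_of_lt_one hr0 (by linarith)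
    _ ≤ 5 := by
        rw [div_le_iff₀ (by linarith)]
        nlinarith

open Finset in
theorem multiplier_truncated_sum_upper_general (K : ℕ) (u β : ℕ → ℝ)
    (hupos : ∀ i ∈ Icc 1 K, 0 < u i)
    (humono : ∀ i ∈ Icc 1 K, ∀ j ∈ Icc 1 K, i ≤ j → u j ≤ u i)
    (hblock : ∀ k : ℕ, ∀ b : ℕ, 2 ≤ b →
      ((((Icc (2 ^ k) (min K (2 ^ (k + 1) - 1))).filter
          (fun i => (b : ℝ) ≤ β i)).card : ℝ)) ≤
        ((Icc (2 ^ k) (min K (2 ^ (k + 1) - 1))).card : ℝ) * (2 : ℝ) ^ (-(b : ℝ) / 4)) :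
    ∀ T : ℝ, 0 < T →
      ∑ j ∈ Icc 1 K, β j * min (u j) T ≤ 67 * ∑ j ∈ Icc 1 K, min (u j) T := by
  intro T hT
  set v : ℕ → ℝ := fun j => min (u j) T
  have hv0 : ∀ j ∈ Icc 1 K, 0 ≤ v j := fun j hj => (lt_min (hupos j hj) hT).le
  have hv : AntitoneOn v (Set.Icc 1 K) := fun i hi j hj hij =>
    min_le_min_right T (humono i (by simpa using hi) j (by simpa using hj) hij)
  have hlevel : ∀ b : ℕ, 2 ≤ b → ∑ j ∈ Icc 1 K with (b : ℝ) ≤ β j, v j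
      ≤ (2 : ℝ) ^ (-(b : ℝ) / 4) * (3 * ∑ j ∈ Icc 1 K, v j) := fun b hb =>
    sum_filter_le_of_card_filter_dyadicBlock_le hv0 hv _ (by positivity) (hblock · b hb)
  have hV : 0 ≤ ∑ j ∈ Icc 1 K, v j := sum_nonneg hv0
  have hgeom : ∀ B : ℕ, ∑ b ∈ Icc 2 B, (2 : ℝ) ^ (-(b : ℝ) / 4) * (3 * ∑ j ∈ Icc 1 K, v j)
      ≤ 5 * (3 * ∑ j ∈ Icc 1 K, v j) := fun B => by
    rw [← sum_mul]
    exact mul_le_mul_of_nonneg_right (sum_Icc_two_rpow_neg_div_four_le B)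
      (mul_nonneg zero_le_three hV)
  linarith [sum_mul_le_of_sum_filter_le hv0 hlevel hgeom]

open Finset in
/-- Deterministic core of Lemma 8: if on every dyadic block
`S_k = {2^k, …, min{K, 2^{k+1}-1}}` at most a fraction `2^{-β/4}` of the arms
have multiplier at least `β` (for each integer `β ≥ 2`), then the
multiplier-weighted truncated sum is at most `67` times the plain one. -/
theorem multiplier_truncated_sum_upper (K : ℕ) (u β : ℕ → ℝ)
    (hK : 1 ≤ K)
    (hupos : ∀ i ∈ Icc 1 K, 0 < u i)
    (humono : ∀ i ∈ Icc 1 K, ∀ j ∈ Icc 1 K, i ≤ j → u j ≤ u i)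
    (hβ : ∀ i ∈ Icc 1 K, 1 ≤ β i)
    (hblock : ∀ k : ℕ, ∀ b : ℕ, 2 ≤ b →
      ((((Icc (2 ^ k) (min K (2 ^ (k + 1) - 1))).filter
          (fun i => (b : ℝ) ≤ β i)).card : ℝ)) ≤
        ((Icc (2 ^ k) (min K (2 ^ (k + 1) - 1))).card : ℝ) * (2 : ℝ) ^ (-(b : ℝ) / 4)) :
    ∀ T : ℝ, 0 < T →
      ∑ j ∈ Icc 1 K, β j * min (u j) T ≤ 67 * ∑ j ∈ Icc 1 K, min (u j) T :=
  multiplier_truncated_sum_upper_general K u β hupos humono hblock
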